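/- Let A ∈ ℝ^{n×n}, B ∈ ℝ^{n×m}, C ∈ ℝ^{r×n}, and suppose R ∈ ℝ^{n×r}, W ∈ ℝ^{m×r} satisfy (A - λ_l I) R_l + B W_l = 0 for columns R_l, W_l and real numbers λ_l (l = 1,…,r), with C R invertible. Define K = W (C R)^{-1}. Then for each l, (A + B K C) R_l = λ_l R_l; i.e., each λ_l is an eigenvalue of the closed-loop matrix A + B K C with eigenvector R_l. -/
import Mathlib


open Matrix

theorem stmt_4 {n m r : ℕ}
    (A : Matrix (Fin n) (Fin n) ℝ) (B : Matrix (Fin n) (Fin m) ℝ)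
    (C : Matrix (Fin r) (Fin n) ℝ)
    (R : Matrix (Fin n) (Fin r) ℝ) (W : Matrix (Fin m) (Fin r) ℝ)
    (lam : Fin r → ℝ)
    (hRW : ∀ l : Fin r,
      (A - lam l • (1 : Matrix (Fin n) (Fin n) ℝ)) *ᵥ (fun i => R i l)
        + B *ᵥ (fun i => W i l) = 0)
    (hinv : IsUnit (C * R))
    (K : Matrix (Fin m) (Fin r) ℝ) (hK : K = W * (C * R)⁻¹) :
    ∀ l : Fin r, (A + B * K * C) *ᵥ (fun i => R i l) = lam l • (fun i => R i l) := by
  intro l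
  have hRcol : (fun i => R i l) = R *ᵥ Pi.single l 1 := by
    ext i; simp [mulVec_single]
  have hWcol : (fun i => W i l) = W *ᵥ Pi.single l 1 := by
    ext i; simp [mulVec_single]
  have hinv' : (C * R)⁻¹ * (C * R) = 1 := nonsing_inv_mul _ ((Matrix.isUnit_iff_isUnit_det _).mp hinv)
  have hKC : B * K * C * R = B * W := by
    rw [hK]
    calc B * (W * (C * R)⁻¹) * C * R = B * W * ((C * R)⁻¹ * (C * R)) := by
          simp only [Matrix.mul_assoc]
      _ = B * W := by rw [hinv', Matrix.mul_one]
  have h := hRW l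
  rw [sub_mulVec, smul_mulVec, one_mulVec] at h
  rw [add_mulVec, hRcol]
  simp only [mulVec_mulVec]
  rw [hKC]
  rw [show (A*R) *ᵥ Pi.single l 1 = A *ᵥ (R *ᵥ Pi.single l 1) from (mulVec_mulVec ..).symm,
    show (B*W) *ᵥ Pi.single l 1 = B *ᵥ (W *ᵥ Pi.single l 1) from (mulVec_mulVec ..).symm,
    ← hWcol, ← hRcol]
  have : A *ᵥ (fun i => R i l) = lam l • (fun i => R i l) - B *ᵥ (fun i => W i l) := by
    rw [eq_sub_iff_add_eq]
    linear_combination (norm := abel) h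
  rw [this]; abel
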